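/- arXiv:nlin/0101051 — 3 statements merged into one kernel-verified Lean document; each statement's English description precedes it below -/
import Mathlib

section
/- Let K ≥ 1. If a configuration X is (ρ,φ)-regular, then the configuration TX is also (ρ,φ)-regular. (In fact, for every n ∈ ℤ and every positive integer N, the number m(TX,n+1,n+N) lies between m(X,n,n+N−1) and m(X,n+2,n+N+1).) -/
/-!
`T` moves `flux K X x = min (X x) (K - X (x + 1))` particles from `x` to `x + 1`, so the count
of `TX` on a window differs from that of `X` by the flux entering at the left end minus the flux
leaving at the right end. Shifting the window one site left or right changes the count of `X` by
`X n - X (n + N)` or by `(K - X (n + 1)) - (K - X (n + N + 1))`, and `min a b - min c d` always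
lies between `a - c` and `b - d`. Hence each window count of `TX` is sandwiched between two window
counts of `X` of the same length, and the density bound `φ N` passes to `TX`.
-/

/-- A configuration on the `K`-lane road: at most `K` particles per site. -/
def IsConf (K : ℤ) (X : ℤ → ℤ) : Prop := ∀ x, 0 ≤ X x ∧ X x ≤ K

/-- The traffic map `T`. -/
def Tmap (K : ℤ) (X : ℤ → ℤ) : ℤ → ℤ := fun x =>
  X x + min (X (x - 1)) (K - X x) - min (X x) (K - X (x + 1))

/-- The number of particles `m(X,a,b) = Σ_{x=a}^{b} X(x)`. -/
noncomputable def msum (X : ℤ → ℤ) (a b : ℤ) : ℤ := ∑ x ∈ Finset.Icc a b, X x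

/-- `X` is `(ρ,φ)`-regular: every window of length `N` has particle density
within `φ(N)` of `ρ`. -/
def IsRegularConf (ρ : ℝ) (φ : ℕ → ℝ) (X : ℤ → ℤ) : Prop :=
  ∀ (n : ℤ) (N : ℕ), 1 ≤ N → |(msum X (n + 1) (n + N) : ℝ) / N - ρ| ≤ φ N

theorem min_sub_le_min_sub_min {α : Type*} [AddCommGroup α] [LinearOrder α]
    [IsOrderedAddMonoid α]
    (a b c d : α) : min (a - c) (b - d) ≤ min a b - min c d := by
  rcases min_choice a b with h | h <;> rw [h]
  · exact (min_le_left _ _).trans (sub_le_sub_left (min_le_left c d) a)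
  · exact (min_le_right _ _).trans (sub_le_sub_left (min_le_right c d) b)

theorem min_sub_min_le_max {α : Type*} [AddCommGroup α] [LinearOrder α]
    [IsOrderedAddMonoid α]
    (a b c d : α) : min a b - min c d ≤ max (a - c) (b - d) := by
  rcases min_choice c d with h | h <;> rw [h]
  · exact (sub_le_sub_right (min_le_left a b) c).trans (le_max_left _ _)
  · exact (sub_le_sub_right (min_le_right a b) d).trans (le_max_right _ _)

theorem abs_sub_le_of_min_le_of_le_max {α : Type*} [AddCommGroup α] [LinearOrder α]
    [IsOrderedAddMonoid α] {a b t ρ ε : α} (ha : |a - ρ| ≤ ε) (hb : |b - ρ| ≤ ε)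
    (hmin : min a b ≤ t) (hmax : t ≤ max a b) : |t - ρ| ≤ ε := by
  rw [abs_sub_le_iff] at ha hb ⊢
  constructor
  · rcases le_max_iff.1 hmax with h | h
    · exact (sub_le_sub_right h ρ).trans ha.1
    · exact (sub_le_sub_right h ρ).trans hb.1
  · rcases min_le_iff.1 hmin with h | h
    · exact (sub_le_sub_left h ρ).trans ha.2
    · exact (sub_le_sub_left h ρ).trans hb.2

theorem msum_eq_add_msum_add_one (X : ℤ → ℤ) {a b : ℤ} (h : a ≤ b) :
    msum X a b = X a + msum X (a + 1) b := by
  rw [msum, msum, ← Finset.insert_Icc_add_one_left_eq_Icc h, Finset.sum_insert (by simp)]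

theorem msum_add_one (X : ℤ → ℤ) {a b : ℤ} (h : a ≤ b + 1) :
    msum X a (b + 1) = msum X a b + X (b + 1) := by
  rw [msum, msum, ← Finset.insert_Icc_right_eq_Icc_add_one h, Finset.sum_insert (by simp),
    add_comm]

theorem msum_window_sub_one (X : ℤ → ℤ) (n : ℤ) (N : ℕ) :
    msum X n (n + N - 1) = msum X (n + 1) (n + N) + (X n - X (n + N)) := by
  have h₁ := msum_eq_add_msum_add_one X (show n ≤ n + N by omega)
  have h₂ := msum_add_one X (show n ≤ n + N - 1 + 1 by omega)
  rw [sub_add_cancel] at h₂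
  linarith

theorem msum_window_add_one (X : ℤ → ℤ) (n : ℤ) (N : ℕ) :
    msum X (n + 2) (n + N + 1) = msum X (n + 1) (n + N) + (X (n + N + 1) - X (n + 1)) := by
  have h₁ := msum_eq_add_msum_add_one X (show n + 1 ≤ n + N + 1 by omega)
  have h₂ := msum_add_one X (show n + 1 ≤ n + N + 1 by omega)
  rw [add_assoc n 1 1, one_add_one_eq_two] at h₁
  linarith

theorem msum_add_telescope (X g : ℤ → ℤ) (n : ℤ) (N : ℕ) :
    msum (fun x => X x + (g (x - 1) - g x)) (n + 1) (n + N) =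
      msum X (n + 1) (n + N) + (g n - g (n + N)) := by
  induction N with
  | zero => simp [msum]
  | succ N ih =>
    rw [Nat.cast_succ, ← add_assoc, msum_add_one _ (by omega), msum_add_one _ (by omega), ih,
      add_sub_cancel_right]
    ring

/-- The number of particles that `Tmap K X` moves from site `x` to site `x + 1`. -/
def flux (K : ℤ) (X : ℤ → ℤ) (x : ℤ) : ℤ := min (X x) (K - X (x + 1))

theorem Tmap_eq_add_flux_sub_flux (K : ℤ) (X : ℤ → ℤ) :
    Tmap K X = fun x => X x + (flux K X (x - 1) - flux K X x) := by
  funext x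
  rw [Tmap, flux, flux, sub_add_cancel]
  ring

theorem msum_Tmap (K : ℤ) (X : ℤ → ℤ) (n : ℤ) (N : ℕ) :
    msum (Tmap K X) (n + 1) (n + N) =
      msum X (n + 1) (n + N) + (flux K X n - flux K X (n + N)) := by
  rw [Tmap_eq_add_flux_sub_flux, msum_add_telescope]

theorem msum_Tmap_between (K : ℤ) (X : ℤ → ℤ) (n : ℤ) (N : ℕ) :
    min (msum X n (n + N - 1)) (msum X (n + 2) (n + N + 1)) ≤
        msum (Tmap K X) (n + 1) (n + N) ∧
      msum (Tmap K X) (n + 1) (n + N) ≤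
        max (msum X n (n + N - 1)) (msum X (n + 2) (n + N + 1)) := by
  have lower := min_sub_le_min_sub_min (X n) (K - X (n + 1)) (X (n + N)) (K - X (n + N + 1))
  have upper := min_sub_min_le_max (X n) (K - X (n + 1)) (X (n + N)) (K - X (n + N + 1))
  rw [sub_sub_sub_cancel_left] at lower upper
  rw [msum_Tmap, flux, flux, msum_window_sub_one, msum_window_add_one, min_add_add_left,
    max_add_add_left]
  exact ⟨(add_le_add_iff_left _).2 lower, (add_le_add_iff_left _).2 upper⟩

theorem IsRegularConf.of_window_between {ρ : ℝ} {φ : ℕ → ℝ} {X Y : ℤ → ℤ}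
    (hX : IsRegularConf ρ φ X)
    (hY : ∀ (n : ℤ) (N : ℕ), min (msum X n (n + N - 1)) (msum X (n + 2) (n + N + 1)) ≤
        msum Y (n + 1) (n + N) ∧
      msum Y (n + 1) (n + N) ≤ max (msum X n (n + N - 1)) (msum X (n + 2) (n + N + 1))) :
    IsRegularConf ρ φ Y := by
  intro n N hN
  have hleft := hX (n - 1) N hN
  have hright := hX (n + 1) N hN
  rw [sub_add_cancel, sub_add_eq_add_sub] at hleft
  rw [add_assoc n 1 1, one_add_one_eq_two, add_right_comm] at hright
  have hN0 : (0 : ℝ) ≤ N := N.cast_nonneg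
  obtain ⟨hmin, hmax⟩ := hY n N
  refine abs_sub_le_of_min_le_of_le_max hleft hright ?_ ?_
  · rw [min_div_div_right hN0]
    gcongr
    exact_mod_cast hmin
  · rw [max_div_div_right hN0]
    gcongr
    exact_mod_cast hmax

theorem stmt_3_general (K : ℤ) (X : ℤ → ℤ)
    (ρ : ℝ) (φ : ℕ → ℝ)
    (hreg : IsRegularConf ρ φ X) :
    IsRegularConf ρ φ (Tmap K X) ∧
    (∀ (n : ℤ) (N : ℕ), 1 ≤ N →
      min (msum X n (n + N - 1)) (msum X (n + 2) (n + N + 1)) ≤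
          msum (Tmap K X) (n + 1) (n + N) ∧
      msum (Tmap K X) (n + 1) (n + N) ≤
          max (msum X n (n + N - 1)) (msum X (n + 2) (n + N + 1))) :=
  ⟨hreg.of_window_between (msum_Tmap_between K X), fun n N _ => msum_Tmap_between K X n N⟩

/-- The traffic map preserves `(ρ,φ)`-regularity; in fact the particle count of
any window of `TX` lies between the counts of the two shifted windows of `X`. -/
theorem stmt_3 (K : ℤ) (hK : 1 ≤ K) (X : ℤ → ℤ) (hX : IsConf K X)
    (ρ : ℝ) (hρ0 : 0 ≤ ρ) (hρK : ρ ≤ K) (φ : ℕ → ℝ)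
    (hφanti : StrictAntiOn φ (Set.Ici 1))
    (hφ0 : Filter.Tendsto φ Filter.atTop (nhds 0))
    (hreg : IsRegularConf ρ φ X) :
    IsRegularConf ρ φ (Tmap K X) ∧
    (∀ (n : ℤ) (N : ℕ), 1 ≤ N →
      min (msum X n (n + N - 1)) (msum X (n + 2) (n + N + 1)) ≤
          msum (Tmap K X) (n + 1) (n + N) ∧
      msum (Tmap K X) (n + 1) (n + N) ≤
          max (msum X n (n + N - 1)) (msum X (n + 2) (n + N + 1))) :=
  stmt_3_general K X ρ φ hreg
end

section
/- Let K ≥ 1, let ρ ∈ [0, K/2) be real, let φ be a strictly decreasing function on the positive integers with φ(N) → 0, and let X be a (ρ,φ)-regular configuration. Let N be a positive integer with φ(N) < K/2 − ρ. Then for every integer t with 4t ≥ (N+1)², the configuration T^t X is free. -/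
/-- A configuration is free if `X(x) + X(x+1) ≤ K` for all `x`. -/
def IsFree (K : ℤ) (X : ℤ → ℤ) : Prop := ∀ x, X x + X (x + 1) ≤ K

/-!
Let `G_t` be the cumulative particle count of `T^t X`, so that `T^t X x = G_t x - G_t (x - 1)`.
On cumulative counts the traffic map is max-plus linear,
`G_{t+1} x = max (G_t (x - 1)) (G_t (x + 1) - K)`, hence
`G_t x = max_{0 ≤ j ≤ t} (G_0 (x - t + 2 j) - K j)`.
Freeness of `T^t X` at `x` says `G_t (x + 1) ≤ G_t (x - 1) + K`. In the maximum defining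
`G_t (x + 1)`, the term of index `j < t` is the term of index `j + 1` of `G_t (x - 1) + K`, and
the term of index `t` is dominated by the term of index `t + 1 - c` because the window of
length `2 c ≥ N` ending at `x + t + 1` carries at most `K c` particles, its density being below
`ρ + φ N < K / 2` by regularity.
-/

section CumulativeCount

variable (X : ℤ → ℤ)

lemma msum_of_lt {a b : ℤ} (h : b < a) : msum X a b = 0 := by
  simp [msum, Finset.Icc_eq_empty_of_lt h]

lemma msum_self (a : ℤ) : msum X a a = X a := by
  simp [msum]

lemma msum_add_msum {a b c : ℤ} (hab : a ≤ b + 1) (hbc : b ≤ c) :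
    msum X a b + msum X (b + 1) c = msum X a c := by
  simp only [msum, ← Finset.Ico_add_one_right_eq_Icc]
  rw [← Finset.sum_union (Finset.Ico_disjoint_Ico_consecutive _ _ _),
    Finset.Ico_union_Ico_eq_Ico hab (by omega)]

noncomputable def cumsum (x : ℤ) : ℤ := msum X 1 x - msum X (x + 1) 0

lemma cumsum_sub_cumsum_pred (x : ℤ) : cumsum X x - cumsum X (x - 1) = X x := by
  have hx := msum_self X x
  unfold cumsum
  rw [sub_add_cancel]
  rcases le_or_gt 1 x with h | h
  · rw [msum_of_lt X (by omega : (0 : ℤ) < x + 1), msum_of_lt X (by omega : (0 : ℤ) < x),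
      ← msum_add_msum X (by omega : (1 : ℤ) ≤ x - 1 + 1) (by omega : x - 1 ≤ x), sub_add_cancel]
    omega
  · rw [msum_of_lt X (by omega : x < 1), msum_of_lt X (by omega : x - 1 < 1),
      ← msum_add_msum X (by omega : x ≤ x + 1) (by omega : x ≤ 0)]
    omega

lemma cumsum_sub_cumsum {a b : ℤ} (h : a ≤ b) : cumsum X b - cumsum X a = msum X (a + 1) b := by
  induction b, h using Int.leInduction with
  | base => rw [sub_self, msum_of_lt X (lt_add_one a)]
  | succ b hab ih =>
    have hstep := cumsum_sub_cumsum_pred X (b + 1)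
    rw [add_sub_cancel_right] at hstep
    rw [← msum_add_msum X (by omega : a + 1 ≤ b + 1) (by omega : b ≤ b + 1), msum_self]
    omega

end CumulativeCount

section Height

variable (K : ℤ) (X : ℤ → ℤ)

/-- The cumulative particle count of `T^t X`. -/
noncomputable def height : ℕ → ℤ → ℤ
  | 0 => cumsum X
  | t + 1 => fun x => max (height t (x - 1)) (height t (x + 1) - K)

lemma height_succ (t : ℕ) (x : ℤ) :
    height K X (t + 1) x = max (height K X t (x - 1)) (height K X t (x + 1) - K) :=
  rfl

lemma tmap_sub_pred_eq_max_sub_max (G : ℤ → ℤ) (x : ℤ) :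
    Tmap K (fun y => G y - G (y - 1)) x
      = max (G (x - 1)) (G (x + 1) - K) - max (G (x - 2)) (G x - K) := by
  simp only [Tmap, add_sub_cancel_right, sub_sub, one_add_one_eq_two]
  omega

lemma height_sub_height_pred (t : ℕ) (x : ℤ) :
    height K X t x - height K X t (x - 1) = (Tmap K)^[t] X x := by
  induction t generalizing x with
  | zero => exact cumsum_sub_cumsum_pred X x
  | succ t ih =>
    have hT : (Tmap K)^[t] X = fun y => height K X t y - height K X t (y - 1) :=
      funext fun y => (ih y).symm
    rw [Function.iterate_succ_apply', hT, tmap_sub_pred_eq_max_sub_max, height_succ, height_succ,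
      sub_add_cancel, sub_sub, one_add_one_eq_two]

lemma height_ge (t : ℕ) (x : ℤ) {j : ℕ} (hj : j ≤ t) :
    cumsum X (x - t + 2 * j) - K * j ≤ height K X t x := by
  induction t generalizing x j with
  | zero => simp [Nat.le_zero.mp hj, height]
  | succ t ih =>
    rcases hj.lt_or_eq with hj | rfl
    · have h := ih (x - 1) (Nat.lt_succ_iff.mp hj)
      rw [show x - 1 - t + 2 * j = x - ↑(t + 1) + 2 * j by push_cast; ring] at h
      exact h.trans (le_max_left _ _)
    · have h := ih (x + 1) le_rfl
      rw [show x + 1 - t + 2 * t = x - ↑(t + 1) + 2 * ↑(t + 1) by push_cast; ring] at h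
      refine le_trans ?_ (le_max_right _ _)
      push_cast at h ⊢
      linarith

lemma exists_height_eq (t : ℕ) (x : ℤ) :
    ∃ j ≤ t, height K X t x = cumsum X (x - t + 2 * j) - K * j := by
  induction t generalizing x with
  | zero => exact ⟨0, le_rfl, by simp [height]⟩
  | succ t ih =>
    rcases le_total (height K X t (x - 1)) (height K X t (x + 1) - K) with h | h
    · obtain ⟨j, hj, e⟩ := ih (x + 1)
      refine ⟨j + 1, by omega, ?_⟩
      rw [height_succ, max_eq_right h, e]
      push_cast
      ring_nf
    · obtain ⟨j, hj, e⟩ := ih (x - 1)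
      refine ⟨j, by omega, ?_⟩
      rw [height_succ, max_eq_left h, e]
      push_cast
      ring_nf

end Height

theorem isFree_iterate_of_msum_le (K : ℤ) (X : ℤ → ℤ) {c t : ℕ} (hc : 0 < c) (hct : c ≤ t)
    (hwin : ∀ n : ℤ, msum X (n + 1) (n + 2 * c) ≤ K * c) : IsFree K ((Tmap K)^[t] X) := by
  intro x
  suffices height K X t (x + 1) ≤ height K X t (x - 1) + K by
    have h₀ := height_sub_height_pred K X t x
    have h₁ := height_sub_height_pred K X t (x + 1)
    rw [add_sub_cancel_right] at h₁
    omega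
  obtain ⟨j, hjt, hj⟩ := exists_height_eq K X t (x + 1)
  rw [hj]
  rcases hjt.lt_or_eq with hjt | rfl
  · have h := height_ge K X t (x - 1) (Nat.succ_le_of_lt hjt)
    rw [show x - 1 - t + 2 * ↑(j + 1) = x + 1 - t + 2 * j by push_cast; ring] at h
    push_cast at h
    linarith
  · have h := height_ge K X j (x - 1) (by omega : j + 1 - c ≤ j)
    rw [Nat.cast_sub (by omega), show x - 1 - j + 2 * (↑(j + 1) - c) = x + 1 + j - 2 * c by
      push_cast; ring] at h
    have hm := cumsum_sub_cumsum X (by omega : x + 1 + j - 2 * c ≤ x + 1 + j)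
    have hw := hwin (x + 1 + j - 2 * c)
    rw [show x + 1 + j - 2 * c + 2 * c = x + 1 + j by ring] at hw
    rw [show x + 1 - j + 2 * j = x + 1 + j by ring]
    push_cast at h
    linarith

lemma two_mul_msum_lt_of_isRegularConf {K : ℤ} {X : ℤ → ℤ} {ρ : ℝ} {φ : ℕ → ℝ}
    (hreg : IsRegularConf ρ φ X) (hφ : StrictAntiOn φ (Set.Ici 1)) {N M : ℕ} (hN : 1 ≤ N)
    (hNφ : φ N < K / 2 - ρ) (hNM : N ≤ M) (n : ℤ) : 2 * msum X (n + 1) (n + M) < K * M := by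
  have hM : 1 ≤ M := hN.trans hNM
  have hφM : φ M ≤ φ N := hφ.antitoneOn hN hM hNM
  have hdens := (abs_le.mp (hreg n M hM)).2
  have hMpos : (0 : ℝ) < M := by exact_mod_cast hM
  have hlt : (msum X (n + 1) (n + M) : ℝ) < K / 2 * M := by
    rw [← div_lt_iff₀ hMpos]
    linarith
  have : (2 * msum X (n + 1) (n + M) : ℝ) < K * M := by linarith
  exact_mod_cast this

theorem stmt_9_general (K : ℤ) (X : ℤ → ℤ)
    (ρ : ℝ) (φ : ℕ → ℝ)
    (hφanti : StrictAntiOn φ (Set.Ici 1))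
    (hreg : IsRegularConf ρ φ X)
    (N : ℕ) (hN : 1 ≤ N) (hNφ : φ N < K / 2 - ρ)
    (t : ℕ) (ht : (N + 1) ^ 2 ≤ 4 * t) :
    IsFree K ((Tmap K)^[t] X) := by
  set c := (N + 1) / 2
  have hsq : 2 * (N + 1) ≤ (N + 1) ^ 2 := by nlinarith
  refine isFree_iterate_of_msum_le K X (c := c) (by omega) (by omega) fun n => ?_
  have h := two_mul_msum_lt_of_isRegularConf hreg hφanti hN hNφ (M := 2 * c) (by omega) n
  rw [Nat.cast_mul, Nat.cast_ofNat] at h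
  linarith

/-- A regular configuration with density below `K/2` becomes free after the
transient period of length `(N+1)²/4`. -/
theorem stmt_9 (K : ℤ) (hK : 1 ≤ K) (X : ℤ → ℤ) (hX : IsConf K X)
    (ρ : ℝ) (hρ0 : 0 ≤ ρ) (hρK : ρ < K / 2) (φ : ℕ → ℝ)
    (hφanti : StrictAntiOn φ (Set.Ici 1))
    (hφ0 : Filter.Tendsto φ Filter.atTop (nhds 0))
    (hreg : IsRegularConf ρ φ X)
    (N : ℕ) (hN : 1 ≤ N) (hNφ : φ N < K / 2 - ρ)
    (t : ℕ) (ht : (N + 1) ^ 2 ≤ 4 * t) :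
    IsFree K ((Tmap K)^[t] X) :=
  stmt_9_general K X ρ φ hφanti hreg N hN hNφ t ht
end

section
/- Let K ≥ 1, let n ≥ 1, and let X be an n-periodic configuration. Then for every integer t ≥ n and every x ∈ ℤ, (T^{t+n} X)(x) = (T^t X)(x); i.e., after the transient period of length at most n, the orbit of X under T is n-periodic in time. -/
/-- The dual configuration `X*(x) = K - X(x)`, describing empty places. -/
def dualConf (K : ℤ) (X : ℤ → ℤ) : ℤ → ℤ := fun x => K - X x

/-- A configuration is `n`-periodic if `X(x+n) = X(x)` for all `x`. -/
def IsPeriodic (n : ℤ) (X : ℤ → ℤ) : Prop := ∀ x, X (x + n) = X x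

/-!
Write `X = S - S (· - 1)` for a height function `S`. The traffic map then becomes the max-plus
linear map `S ↦ fun x => max (S (x - 1)) (S (x + 1) - K)`, whose `t`-th iterate is
`x ↦ max_{0 ≤ j ≤ t} (S (x - t + 2 j) - j K)`. Periodicity of `X` makes `S` quasi-periodic,
`S (y + n) = S y + m`. For `t ≥ n` the `t + n + 1` terms of the `(t + n)`-th iterate are covered by
two windows of `t + 1` consecutive terms, shifted by `0` and by `n`; each window is the `t`-th
iterate plus a constant (`-m`, resp. `m - n K`). Hence the `(t + n)`-th iterate is the `t`-th one
plus a constant, which disappears when we difference back to configurations.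
-/

open Finset

def backDiff (S : ℤ → ℤ) : ℤ → ℤ := fun x => S x - S (x - 1)

def heightMap (K : ℤ) (S : ℤ → ℤ) : ℤ → ℤ := fun x => max (S (x - 1)) (S (x + 1) - K)

lemma Tmap_backDiff (K : ℤ) (S : ℤ → ℤ) : Tmap K (backDiff S) = backDiff (heightMap K S) := by
  funext x
  simp only [Tmap, backDiff, heightMap, sub_add_cancel, add_sub_cancel_right]
  omega

lemma iterate_Tmap_backDiff (K : ℤ) (S : ℤ → ℤ) (t : ℕ) :
    (Tmap K)^[t] (backDiff S) = backDiff ((heightMap K)^[t] S) := by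
  induction t with
  | zero => rfl
  | succ t ih => rw [Function.iterate_succ_apply', ih, Tmap_backDiff, Function.iterate_succ_apply']

lemma exists_backDiff_eq (X : ℤ → ℤ) : ∃ S, backDiff S = X := by
  refine ⟨fun x => ∑ y ∈ Ioc 0 x, X y - ∑ y ∈ Ioc x 0, X y, funext fun x => ?_⟩
  rcases le_or_gt x 0 with hx | hx
  · rw [backDiff, ← insert_Ioc_left_eq_Ioc_sub_one hx, sum_insert (by simp),
      Ioc_eq_empty (by omega : ¬ 0 < x), Ioc_eq_empty (by omega : ¬ 0 < x - 1)]
    ring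
  · rw [backDiff, ← insert_Ioc_sub_one_right_eq_Ioc hx, sum_insert (by simp),
      Ioc_eq_empty (by omega : ¬ x < 0), Ioc_eq_empty (by omega : ¬ x - 1 < 0)]
    ring

lemma exists_add_eq_add_of_isPeriodic_backDiff {n : ℤ} {S : ℤ → ℤ}
    (h : IsPeriodic n (backDiff S)) : ∃ m, ∀ y, S (y + n) = S y + m := by
  have hP : Function.Periodic (fun y => S (y + n) - S y) 1 := fun y => by
    have hstep := h (y + 1)
    simp only [backDiff, add_sub_cancel_right, add_right_comm y 1 n] at hstep ⊢
    omega
  exact ⟨S n - S 0, fun y => by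
    have hy := hP.int_mul_eq y
    simp only [Int.cast_id, mul_one, zero_add] at hy
    omega⟩

lemma sup'_range_eq_sup_sup'_shift {α : Type*} [SemilatticeSup α] (f : ℕ → α) {a b : ℕ}
    (hb : b ≤ a + 1) :
    (range (a + b + 1)).sup' nonempty_range_add_one f =
      (range (a + 1)).sup' nonempty_range_add_one f ⊔
        (range (a + 1)).sup' nonempty_range_add_one (fun j => f (j + b)) := by
  have hcover : range (a + b + 1) = range (a + 1) ∪ (range (a + 1)).image (· + b) := by
    ext j
    simp only [mem_union, mem_range, mem_image]
    constructor
    · intro hj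
      by_cases hja : j < a + 1
      · exact Or.inl hja
      · exact Or.inr ⟨j - b, by omega, by omega⟩
    · rintro (hj | ⟨i, hi, rfl⟩) <;> omega
  rw [sup'_congr _ hcover (fun _ _ => rfl), sup'_union, sup'_image]
  · rfl
  · exact nonempty_range_add_one.image _

lemma iterate_heightMap_eq_sup' (K : ℤ) (S : ℤ → ℤ) (t : ℕ) (x : ℤ) :
    (heightMap K)^[t] S x =
      (range (t + 1)).sup' nonempty_range_add_one (fun j : ℕ => S (x - t + 2 * j) - j * K) := by
  induction t generalizing x with
  | zero => simp
  | succ t ih =>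
    rw [Function.iterate_succ_apply', heightMap, ih, ih, sup'_range_eq_sup_sup'_shift _ le_add_self,
      sub_eq_add_neg _ K, sup'_add]
    congr 1 <;> refine sup'_congr _ rfl fun j _ => ?_ <;> push_cast <;> ring_nf

lemma iterate_heightMap_add_eq_add {K : ℤ} {S : ℤ → ℤ} {n : ℕ} {m : ℤ}
    (hS : ∀ y, S (y + n) = S y + m) {t : ℕ} (ht : n ≤ t) (x : ℤ) :
    (heightMap K)^[t + n] S x = (heightMap K)^[t] S x + max (-m) (m - n * K) := by
  rw [iterate_heightMap_eq_sup', iterate_heightMap_eq_sup',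
    sup'_range_eq_sup_sup'_shift _ (by omega), ← max_add_add_left, sup'_add, sup'_add]
  congr 1 <;> refine sup'_congr _ rfl fun j _ => ?_
  · rw [show x - t + 2 * j = x - (t + n : ℕ) + 2 * j + n by push_cast; ring, hS]
    ring
  · rw [show x - (t + n : ℕ) + 2 * (j + n : ℕ) = x - t + 2 * j + n by push_cast; ring, hS]
    push_cast
    ring

theorem stmt_14_general (K : ℤ) (n : ℕ) (X : ℤ → ℤ) (hper : IsPeriodic (n : ℤ) X) :
    ∀ t : ℕ, n ≤ t → ∀ x : ℤ, (Tmap K)^[t + n] X x = (Tmap K)^[t] X x := by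
  intro t ht x
  obtain ⟨S, rfl⟩ := exists_backDiff_eq X
  obtain ⟨m, hm⟩ := exists_add_eq_add_of_isPeriodic_backDiff hper
  simp only [iterate_Tmap_backDiff, backDiff, iterate_heightMap_add_eq_add hm ht]
  ring

/-- After the transient period (of length at most `n`), the orbit of an
`n`-periodic configuration is `n`-periodic in time. -/
theorem stmt_14 (K : ℤ) (hK : 1 ≤ K) (n : ℕ) (hn : 1 ≤ n) (X : ℤ → ℤ)
    (hX : IsConf K X) (hper : IsPeriodic (n : ℤ) X) :
    ∀ t : ℕ, n ≤ t → ∀ x : ℤ, (Tmap K)^[t + n] X x = (Tmap K)^[t] X x :=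
  stmt_14_general K n X hper
end
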